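/- arXiv:1712.03389 — 5 statements merged into one kernel-verified Lean document; each statement's English description precedes it below -/
import Mathlib

section
/- For the synchronous dispersion process with M particles on the complete graph K_n: for every constant δ>0 there exist constants C>0 and n_0 such that for all n ≥ n_0, if the number of particles satisfies M ≤ (1/2)(1−δ)n, then with probability at least 1 − C/n the dispersion time satisfies T_Disp ≤ C·log n. -/
/-!
Call a particle unhappy when it shares its vertex with another one. Two particles `i ≠ j` can
only meet at time `t + 1` if one of them, say `i`, is unhappy at time `t`. Then `i` jumps to a
uniformly random one of `n - 1` vertices, independently of the past and of the jump of `j`,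
which together determine where `j` will be; so they meet with probability at most
`P(i unhappy) / (n - 1)`. Summing over the partners of each particle, the expected number of
unhappy particles shrinks by the factor `2 (M - 1) / (n - 1) ≤ 1 - δ` at every step. After
`T ≈ 2 log n / δ` steps it is at most `M / n² ≤ 1 / n`, which bounds the probability that the
configuration is not yet injective.
-/

open MeasureTheory ProbabilityTheory
open scoped Classical BigOperators

/-- The vertex of `K_n` (without loops) reached from `v` by the transition indexed by
`r : Fin (n-1)`: the `n - 1` possible values are exactly the vertices different from `v`. -/
noncomputable def knJump {n : ℕ} (v : Fin n) (r : Fin (n - 1)) : Fin n :=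
  have h : n - 1 + 1 = n := by have := r.pos; omega
  Fin.cast h ((Fin.cast h.symm v).succAbove r)

/-- The synchronous dispersion process on the complete graph `K_n` (without loops), with
`M` particles all starting at the origin vertex `o`.  `X t i` is the random transition
index used by particle `i` at step `t` (consulted only when particle `i` is unhappy,
i.e. shares its vertex with another particle).  `knPos o X t i` is the position of
particle `i` at time step `t`. -/
noncomputable def knPos {n M : ℕ} (o : Fin n) (X : ℕ → Fin M → Fin (n - 1)) :
    ℕ → Fin M → Fin n
  | 0 => fun _ => o
  | t + 1 => fun i =>
      if ∃ j, j ≠ i ∧ knPos o X t j = knPos o X t i then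
        knJump (knPos o X t i) (X t i)
      else knPos o X t i

open scoped ENNReal

def Unhappy {ι V : Type*} (c : ι → V) (k : ι) : Prop :=
  ∃ j, j ≠ k ∧ c j = c k

lemma injective_iff_forall_not_unhappy {ι V : Type*} {c : ι → V} :
    Function.Injective c ↔ ∀ k, ¬Unhappy c k := by
  simp only [Function.Injective, Unhappy, not_exists, not_and]
  exact ⟨fun h k j hjk hc => hjk (h hc), fun h a b hab => by_contra fun hne => h b a hne hab⟩

lemma knJump_injective {n : ℕ} (v : Fin n) : Function.Injective (knJump v) := by
  intro a b hab
  have hv := congrArg Fin.val hab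
  simp only [knJump, Fin.val_cast] at hv
  exact Fin.succAbove_right_injective (Fin.val_injective hv)

lemma knPos_succ {n M : ℕ} (o : Fin n) (Y : ℕ → Fin M → Fin (n - 1)) (t : ℕ) (k : Fin M) :
    knPos o Y (t + 1) k =
      if Unhappy (knPos o Y t) k then knJump (knPos o Y t k) (Y t k) else knPos o Y t k :=
  -- not `rfl`: the two conditions carry different `Decidable` instances
  if_congr Iff.rfl rfl rfl

section Measurability

variable {Ω : Type*} {n M : ℕ} (o : Fin n) (X : ℕ → Fin M → Ω → Fin (n - 1))

noncomputable def knConfig (t : ℕ) (ω : Ω) : Fin M → Fin n :=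
  knPos o (fun s k => X s k ω) t

lemma knConfig_succ (t : ℕ) (ω : Ω) (k : Fin M) :
    knConfig o X (t + 1) ω k =
      if Unhappy (knConfig o X t ω) k then knJump (knConfig o X t ω k) (X t k ω)
      else knConfig o X t ω k :=
  knPos_succ o _ t k

lemma unhappy_or_unhappy_of_knConfig_succ_eq {t : ℕ} {ω : Ω} {i j : Fin M} (hij : i ≠ j)
    (h : knConfig o X (t + 1) ω i = knConfig o X (t + 1) ω j) :
    Unhappy (knConfig o X t ω) i ∨ Unhappy (knConfig o X t ω) j := by
  by_contra! hhappy
  rw [knConfig_succ, knConfig_succ, if_neg hhappy.1, if_neg hhappy.2] at h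
  exact hhappy.1 ⟨j, hij.symm, h.symm⟩

lemma measurable_knConfig_succ_apply {m : MeasurableSpace Ω} {t : ℕ} {k : Fin M}
    (hpos : Measurable[m] (knConfig o X t)) (hX : Measurable[m] (X t k)) :
    Measurable[m] fun ω => knConfig o X (t + 1) ω k := by
  simp only [knConfig_succ]
  exact (measurable_of_countable fun p : (Fin M → Fin n) × Fin (n - 1) =>
    if Unhappy p.1 k then knJump (p.1 k) p.2 else p.1 k).comp (hpos.prodMk hX)

lemma measurable_knConfig {m : MeasurableSpace Ω} {t : ℕ}
    (hX : ∀ s < t, ∀ k, Measurable[m] (X s k)) : Measurable[m] (knConfig o X t) := by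
  induction t with
  | zero => exact measurable_const
  | succ t ih =>
    exact measurable_pi_lambda _ fun k => measurable_knConfig_succ_apply o X
      (ih fun s hs => hX s (by omega)) (hX t (by omega) k)

abbrev coordinateSigma (S : Set (ℕ × Fin M)) : MeasurableSpace Ω :=
  ⨆ p ∈ S, MeasurableSpace.comap (X p.1 p.2) inferInstance

lemma measurable_coordinateSigma {S : Set (ℕ × Fin M)} {p : ℕ × Fin M} (hp : p ∈ S) :
    Measurable[coordinateSigma X S] (X p.1 p.2) :=
  Measurable.of_comap_le (le_iSup₂ (f := fun p _ => MeasurableSpace.comap (X p.1 p.2) _) p hp)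

end Measurability

lemma measure_iUnion_inter_preimage_singleton_le {Ω β : Type*} {m mΩ : MeasurableSpace Ω}
    [Countable β] [MeasurableSpace β] [MeasurableSingletonClass β]
    {P : Measure Ω} {Y : Ω → β} {q : ℝ≥0∞} {A : β → Set Ω} (hm : m ≤ mΩ)
    (hind : Indep m (MeasurableSpace.comap Y inferInstance) P)
    (hY : ∀ b, P (Y ⁻¹' {b}) ≤ q) (hA : ∀ b, MeasurableSet[m] (A b))
    (hdisj : Pairwise fun b b' => Disjoint (A b) (A b')) :
    P (⋃ b, A b ∩ Y ⁻¹' {b}) ≤ q * P (⋃ b, A b) :=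
  calc P (⋃ b, A b ∩ Y ⁻¹' {b}) ≤ ∑' b, P (A b ∩ Y ⁻¹' {b}) := measure_iUnion_le _
    _ = ∑' b, P (A b) * P (Y ⁻¹' {b}) := by
        refine tsum_congr fun b => ?_
        exact (Indep_iff _ _ _).1 hind _ _ (hA b) ⟨{b}, measurableSet_singleton b, rfl⟩
    _ ≤ ∑' b, P (A b) * q := ENNReal.tsum_le_tsum fun b => by gcongr; exact hY b
    _ = q * P (⋃ b, A b) := by
        rw [ENNReal.tsum_mul_right, ← measure_iUnion hdisj fun b => hm _ (hA b), mul_comm]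

lemma sum_sum_erase_add_eq {ι : Type*} [Fintype ι] [DecidableEq ι] (a : ι → ℝ≥0∞) :
    ∑ i, ∑ j ∈ Finset.univ.erase i, (a j + a i) =
      2 * ((Fintype.card ι - 1 : ℕ) : ℝ≥0∞) * ∑ i, a i := by
  have hswap : ∑ i, ∑ j ∈ Finset.univ.erase i, a j = ∑ i, ∑ j ∈ Finset.univ.erase i, a i :=
    Finset.sum_comm' fun i j => by simp [ne_comm]
  have hcard (i : ι) : (Finset.univ.erase i).card = Fintype.card ι - 1 := by
    rw [Finset.card_erase_of_mem (Finset.mem_univ i), Finset.card_univ]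
  simp only [Finset.sum_add_distrib, hswap, Finset.sum_const, hcard, nsmul_eq_mul,
    ← Finset.mul_sum]
  ring

section Dispersion

variable {Ω : Type*} [MeasurableSpace Ω] {P : Measure Ω} {n M : ℕ} {o : Fin n}
  {X : ℕ → Fin M → Ω → Fin (n - 1)} {q : ℝ≥0∞}

lemma indep_coordinateSigma (hXmeas : ∀ t k, Measurable (X t k))
    (hind : iIndepFun (fun p : ℕ × Fin M => X p.1 p.2) P) {S T : Set (ℕ × Fin M)}
    (hST : Disjoint S T) : Indep (coordinateSigma X S) (coordinateSigma X T) P := by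
  have hle (p : ℕ × Fin M) : MeasurableSpace.comap (X p.1 p.2) inferInstance ≤ ‹_› :=
    (hXmeas p.1 p.2).comap_le
  exact indep_iSup_of_disjoint hle hind.iIndep hST

lemma measure_unhappy_inter_knConfig_succ_eq_le (hXmeas : ∀ t k, Measurable (X t k))
    (hind : iIndepFun (fun p : ℕ × Fin M => X p.1 p.2) P)
    (hq : ∀ t k v, P {ω | X t k ω = v} ≤ q) {t : ℕ} {i j : Fin M} (hij : i ≠ j) :
    P ({ω | Unhappy (knConfig o X t ω) i} ∩
        {ω | knConfig o X (t + 1) ω i = knConfig o X (t + 1) ω j}) ≤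
      q * P {ω | Unhappy (knConfig o X t ω) i} := by
  set S : Set (ℕ × Fin M) := {p | p.1 < t} ∪ {(t, j)}
  have hindep : Indep (coordinateSigma X S) (MeasurableSpace.comap (X t i) inferInstance) P := by
    have hST : Disjoint S {(t, i)} := by simp [S, hij]
    simpa only [coordinateSigma, iSup_singleton] using indep_coordinateSigma hXmeas hind hST
  have hS : coordinateSigma X S ≤ ‹MeasurableSpace Ω› :=
    iSup₂_le fun p _ => (hXmeas p.1 p.2).comap_le
  have hconf : Measurable[coordinateSigma X S] (knConfig o X t) :=
    measurable_knConfig o X fun s hs k => measurable_coordinateSigma X (p := (s, k)) (Or.inl hs)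
  have hconfj : Measurable[coordinateSigma X S] fun ω => knConfig o X (t + 1) ω j :=
    measurable_knConfig_succ_apply o X hconf
      (measurable_coordinateSigma X (p := (t, j)) (Or.inr rfl))
  -- `A b`: particle `i` is unhappy, and the jump `b` takes it to the next vertex of `j`,
  -- which is determined by the past and by the jump of `j`, hence independent of `X t i`
  let A (b : Fin (n - 1)) : Set Ω := {ω | Unhappy (knConfig o X t ω) i ∧
    knJump (knConfig o X t ω i) b = knConfig o X (t + 1) ω j}
  have hA (b : Fin (n - 1)) : MeasurableSet[coordinateSigma X S] (A b) :=
    (hconf.prodMk hconfj) (t := {c | Unhappy c.1 i ∧ knJump (c.1 i) b = c.2})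
      (Set.to_countable _).measurableSet
  have hdisj : Pairwise fun b b' => Disjoint (A b) (A b') := fun b b' hbb' =>
    Set.disjoint_left.2 fun ω hb hb' => hbb' (knJump_injective _ (hb.2.trans hb'.2.symm))
  calc _ ≤ P (⋃ b, A b ∩ X t i ⁻¹' {b}) := by
        refine measure_mono fun ω ⟨(hU : Unhappy _ i), (hmeet : knConfig o X (t + 1) ω i = _)⟩ =>
          Set.mem_iUnion.2 ⟨X t i ω, ⟨hU, ?_⟩, rfl⟩
        rwa [knConfig_succ, if_pos hU] at hmeet
    _ ≤ q * P (⋃ b, A b) :=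
        measure_iUnion_inter_preimage_singleton_le hS hindep (hq t i) hA hdisj
    _ ≤ q * P {ω | Unhappy (knConfig o X t ω) i} := by
        gcongr
        exact Set.iUnion_subset fun b ω hω => hω.1

lemma measure_knConfig_succ_eq_le (hXmeas : ∀ t k, Measurable (X t k))
    (hind : iIndepFun (fun p : ℕ × Fin M => X p.1 p.2) P)
    (hq : ∀ t k v, P {ω | X t k ω = v} ≤ q) {t : ℕ} {i j : Fin M} (hij : i ≠ j) :
    P {ω | knConfig o X (t + 1) ω i = knConfig o X (t + 1) ω j} ≤
      q * (P {ω | Unhappy (knConfig o X t ω) i} + P {ω | Unhappy (knConfig o X t ω) j}) :=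
  calc _ ≤ P (({ω | Unhappy (knConfig o X t ω) i} ∩
          {ω | knConfig o X (t + 1) ω i = knConfig o X (t + 1) ω j}) ∪
        ({ω | Unhappy (knConfig o X t ω) j} ∩
          {ω | knConfig o X (t + 1) ω j = knConfig o X (t + 1) ω i})) :=
        measure_mono fun _ hmeet => (unhappy_or_unhappy_of_knConfig_succ_eq o X hij hmeet).imp
          (fun hi => ⟨hi, hmeet⟩) (fun hj => ⟨hj, Eq.symm hmeet⟩)
    _ ≤ _ := measure_union_le _ _
    _ ≤ _ := add_le_add (measure_unhappy_inter_knConfig_succ_eq_le hXmeas hind hq hij)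
        (measure_unhappy_inter_knConfig_succ_eq_le hXmeas hind hq hij.symm)
    _ = _ := (mul_add _ _ _).symm

lemma sum_measure_unhappy_succ_le (hXmeas : ∀ t k, Measurable (X t k))
    (hind : iIndepFun (fun p : ℕ × Fin M => X p.1 p.2) P)
    (hq : ∀ t k v, P {ω | X t k ω = v} ≤ q) (t : ℕ) :
    ∑ i, P {ω | Unhappy (knConfig o X (t + 1) ω) i} ≤
      2 * ((M - 1 : ℕ) : ℝ≥0∞) * q * ∑ i, P {ω | Unhappy (knConfig o X t ω) i} := by
  have hunion (i : Fin M) : {ω | Unhappy (knConfig o X (t + 1) ω) i} =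
      ⋃ j ∈ Finset.univ.erase i, {ω | knConfig o X (t + 1) ω j = knConfig o X (t + 1) ω i} := by
    ext ω
    simp [Unhappy]
  calc _ ≤ ∑ i, ∑ j ∈ Finset.univ.erase i,
        P {ω | knConfig o X (t + 1) ω j = knConfig o X (t + 1) ω i} :=
        Finset.sum_le_sum fun i _ => (hunion i).symm ▸ measure_biUnion_finset_le _ _
    _ ≤ ∑ i, ∑ j ∈ Finset.univ.erase i, q *
        (P {ω | Unhappy (knConfig o X t ω) j} + P {ω | Unhappy (knConfig o X t ω) i}) :=
        Finset.sum_le_sum fun i _ => Finset.sum_le_sum fun j hj =>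
          measure_knConfig_succ_eq_le hXmeas hind hq (Finset.ne_of_mem_erase hj)
    _ = _ := by
        simp only [← Finset.mul_sum, sum_sum_erase_add_eq, Fintype.card_fin]
        ring

lemma sum_measure_unhappy_le [IsProbabilityMeasure P] (hXmeas : ∀ t k, Measurable (X t k))
    (hind : iIndepFun (fun p : ℕ × Fin M => X p.1 p.2) P)
    (hq : ∀ t k v, P {ω | X t k ω = v} ≤ q) (t : ℕ) :
    ∑ i, P {ω | Unhappy (knConfig o X t ω) i} ≤ (2 * ((M - 1 : ℕ) : ℝ≥0∞) * q) ^ t * M := by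
  induction t with
  | zero =>
    calc _ ≤ ∑ _i : Fin M, (1 : ℝ≥0∞) := Finset.sum_le_sum fun i _ => prob_le_one
      _ = _ := by simp
  | succ t ih =>
    calc _ ≤ 2 * ((M - 1 : ℕ) : ℝ≥0∞) * q * ∑ i, P {ω | Unhappy (knConfig o X t ω) i} :=
          sum_measure_unhappy_succ_le hXmeas hind hq t
      _ ≤ 2 * ((M - 1 : ℕ) : ℝ≥0∞) * q * ((2 * ((M - 1 : ℕ) : ℝ≥0∞) * q) ^ t * M) := by
          gcongr
      _ = _ := by ring

lemma one_sub_le_measureReal_knConfig_injective [IsProbabilityMeasure P]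
    (hXmeas : ∀ t k, Measurable (X t k))
    (hind : iIndepFun (fun p : ℕ × Fin M => X p.1 p.2) P) {r : ℝ} (hr : 0 ≤ r)
    (hq : ∀ t k v, P {ω | X t k ω = v} ≤ ENNReal.ofReal r) (T : ℕ) :
    1 - (2 * ((M - 1 : ℕ) : ℝ) * r) ^ T * M ≤
      P.real {ω | Function.Injective (knConfig o X T ω)} := by
  set good := {ω | Function.Injective (knConfig o X T ω)}
  have hgood : MeasurableSet good :=
    (measurable_knConfig o X fun s _ k => hXmeas s k)
      (Set.to_countable {c : Fin M → Fin n | Function.Injective c}).measurableSet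
  have hBad : P goodᶜ ≤ ENNReal.ofReal ((2 * ((M - 1 : ℕ) : ℝ) * r) ^ T * M) :=
    calc _ = P (⋃ i, {ω | Unhappy (knConfig o X T ω) i}) := by
          congr 1
          ext ω
          simp [good, injective_iff_forall_not_unhappy]
      _ ≤ ∑ i, P {ω | Unhappy (knConfig o X T ω) i} := measure_iUnion_fintype_le _ _
      _ ≤ (2 * ((M - 1 : ℕ) : ℝ≥0∞) * ENNReal.ofReal r) ^ T * M :=
          sum_measure_unhappy_le hXmeas hind hq T
      _ = _ := by
          rw [ENNReal.ofReal_mul (by positivity), ENNReal.ofReal_pow (by positivity),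
            ENNReal.ofReal_mul (by positivity), ENNReal.ofReal_mul (by positivity)]
          simp
  have hcompl := probReal_compl_eq_one_sub (μ := P) hgood.compl
  rw [compl_compl] at hcompl
  have hBad' : P.real goodᶜ ≤ (2 * ((M - 1 : ℕ) : ℝ) * r) ^ T * M :=
    ENNReal.toReal_le_of_le_ofReal (by positivity) hBad
  linarith

end Dispersion

lemma contraction_factor_le_one_sub_min {δ : ℝ} (hδ : 0 < δ) {n M : ℕ} (hn : 2 ≤ n)
    (hM : (M : ℝ) ≤ 1 / 2 * (1 - δ) * n) :
    2 * ((M - 1 : ℕ) : ℝ) * (1 / ((n : ℝ) - 1)) ≤ 1 - min δ 1 := by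
  have hn' : (2 : ℝ) ≤ n := by exact_mod_cast hn
  rcases Nat.eq_zero_or_pos M with rfl | hM0
  · simp
  have hM1 : (1 : ℝ) ≤ M := by exact_mod_cast hM0
  have hδ1 : δ < 1 := by nlinarith
  rw [min_eq_left hδ1.le, Nat.cast_sub hM0, Nat.cast_one, ← mul_div_assoc, mul_one,
    div_le_iff₀ (by linarith)]
  nlinarith

lemma exists_nat_le_mul_log_and_pow_mul_le {ε : ℝ} (hε : 0 < ε) {n : ℕ} (hn : 3 ≤ n) {ρ : ℝ}
    (hρ0 : 0 ≤ ρ) (hρ : ρ ≤ 1 - ε) {m : ℝ} (hm0 : 0 ≤ m) (hm : m ≤ n) :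
    ∃ T : ℕ, (T : ℝ) ≤ (2 / ε + 2) * Real.log n ∧ ρ ^ T * m ≤ 1 / n := by
  have hn' : (3 : ℝ) ≤ n := by exact_mod_cast hn
  have hlog : 1 ≤ Real.log n := by
    rw [Real.le_log_iff_exp_le (by linarith)]
    linarith [Real.exp_one_lt_d9]
  refine ⟨⌈2 * Real.log n / ε⌉₊, ?_, ?_⟩
  · have := Nat.ceil_lt_add_one (show 0 ≤ 2 * Real.log n / ε by positivity)
    rw [add_mul, div_mul_eq_mul_div]
    linarith
  · set T := ⌈2 * Real.log n / ε⌉₊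
    have hεT : 2 * Real.log n ≤ ε * T := by
      rw [← div_le_iff₀' hε]
      exact Nat.le_ceil _
    have hpow : ρ ^ T ≤ 1 / (n : ℝ) ^ 2 :=
      calc ρ ^ T ≤ Real.exp (-ε) ^ T := by
            gcongr
            linarith [Real.one_sub_le_exp_neg ε]
        _ = Real.exp (-(ε * T)) := by rw [← Real.exp_nat_mul]; ring_nf
        _ ≤ Real.exp (-(2 * Real.log n)) := by gcongr
        _ = 1 / (n : ℝ) ^ 2 := by
            rw [Real.exp_neg, ← Real.exp_log (show (0 : ℝ) < n ^ 2 by positivity), Real.log_pow]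
            norm_num
    calc ρ ^ T * m ≤ 1 / (n : ℝ) ^ 2 * n := by gcongr
      _ = 1 / n := by field_simp

/-- Dispersion on `K_n` with at most `(1/2)(1-δ)n` particles finishes in `O(log n)`
steps with probability `1 - O(1/n)`. -/
theorem dispersion_complete_graph_fast :
    ∀ δ : ℝ, 0 < δ →
    ∃ C : ℝ, 0 < C ∧ ∃ n₀ : ℕ, ∀ n : ℕ, n₀ ≤ n →
    ∀ M : ℕ, (M : ℝ) ≤ (1 / 2) * (1 - δ) * n →
    ∀ (Ω : Type) (_ : MeasurableSpace Ω) (P : Measure Ω), IsProbabilityMeasure P →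
    ∀ (X : ℕ → Fin M → Ω → Fin (n - 1)) (o : Fin n),
    (∀ t i, Measurable (X t i)) →
    (∀ t i (v : Fin (n - 1)), (P {ω | X t i ω = v}).toReal = 1 / ((n : ℝ) - 1)) →
    iIndepFun (fun ti : ℕ × Fin M => X ti.1 ti.2) P →
    (P {ω | ∃ t : ℕ, (t : ℝ) ≤ C * Real.log n ∧
        Function.Injective (knPos o (fun s j => X s j ω) t)}).toReal ≥ 1 - C / n := by
  intro δ hδ
  have hε : 0 < min δ 1 := lt_min hδ one_pos
  refine ⟨2 / min δ 1 + 2, by positivity, 3, fun n hn M hM Ω _ P _ X o hXmeas hXunif hXindep => ?_⟩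
  have hn' : (3 : ℝ) ≤ n := by exact_mod_cast hn
  have hq (t k v) : P {ω | X t k ω = v} ≤ ENNReal.ofReal (1 / ((n : ℝ) - 1)) := by
    rw [← hXunif t k v, ENNReal.ofReal_toReal (measure_ne_top P _)]
  have hr : 0 ≤ 1 / ((n : ℝ) - 1) := one_div_nonneg.2 (by linarith)
  obtain ⟨T, hT, hdecay⟩ := exists_nat_le_mul_log_and_pow_mul_le hε hn
    (mul_nonneg (by positivity) hr)
    (contraction_factor_le_one_sub_min hδ (by omega) hM) M.cast_nonneg (by nlinarith)
  rw [ge_iff_le]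
  calc 1 - (2 / min δ 1 + 2) / n ≤ 1 - 1 / n := by gcongr; linarith [div_pos two_pos hε]
    _ ≤ 1 - (2 * ((M - 1 : ℕ) : ℝ) * (1 / ((n : ℝ) - 1))) ^ T * M := by linarith
    _ ≤ P.real {ω | Function.Injective (knConfig o X T ω)} :=
        one_sub_le_measureReal_knConfig_injective hXmeas hXindep hr hq T
    _ ≤ _ := measureReal_mono fun _ hω => by exact ⟨T, hT, hω⟩
end

section
/- For the simple symmetric random walk on ℤ started at 0 and any integers T ≥ 1 and 0 ≤ r ≤ T, the probability that the walk returns to the origin exactly r times in the first 2T steps equals 2^{−(2T−r)}·C(2T−r, T). -/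
/-!
By independence every sequence of `2T` fair coin flips has probability `2^{-2T}`, so it suffices
to show that exactly `2^r C(2T-r, T)` of the `±1` paths of length `2T` return to the origin
exactly `r` times.

Let `N(n, j, x)` count paths of length `n` with `j` returns ending at `x`. Both sides of
`N(m + j, j, x) = 2^j N(m, 0, |x| + j)` satisfy the same one-step recursion: a return is traded for
a step away from the origin, and the sign of the excursion that follows it for a factor `2`.
Summing over `x` (and folding negative endpoints onto positive ones by symmetry) turns the count
into `2^r (R(m, r) + R(m, r + 1))` with `m = 2T - r`, where `R(m, c)` counts paths of length `m`
that avoid the origin and end at height `≥ c`. These satisfy Pascal's recursion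
`R(m + 1, c) = R(m, c - 1) + R(m, c + 1)` for `c ≥ 1` and `R(m + 1, 0) = R(m + 1, 1)`, from which
`R(m, r) + R(m, r + 1) = C(m, T)` follows by induction on `m`.
-/

open MeasureTheory ProbabilityTheory
open scoped Classical BigOperators

namespace SimpleRandomWalk

open Finset

def step (b : Bool) : ℤ := if b then 1 else -1

def walk (b : ℕ → Bool) (t : ℕ) : ℤ := ∑ i ∈ range t, step (b i)

def returnCount (n : ℕ) (b : ℕ → Bool) : ℕ := #{t ∈ Icc 1 n | walk b t = 0}

/-- Paths of length `n` are tuples `Fin n → Bool`; the padding beyond `n` is never read. -/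
def extendFalse {n : ℕ} (v : Fin n → Bool) (i : ℕ) : Bool :=
  if h : i < n then v ⟨i, h⟩ else false

noncomputable def pathCount (n j : ℕ) (p : ℤ → Prop) : ℕ :=
  #{v : Fin n → Bool | returnCount n (extendFalse v) = j ∧ p (walk (extendFalse v) n)}

theorem step_not (b : Bool) : step (!b) = -step b := by
  cases b <;> rfl

theorem walk_succ (b : ℕ → Bool) (t : ℕ) : walk b (t + 1) = walk b t + step (b t) :=
  sum_range_succ _ _

theorem abs_walk_le (b : ℕ → Bool) (t : ℕ) : |walk b t| ≤ t := by
  induction t with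
  | zero => simp [walk]
  | succ t ih =>
    rw [walk_succ]
    have : |step (b t)| = 1 := by cases b t <;> rfl
    push_cast
    exact (abs_add_le _ _).trans (by linarith)

theorem walk_congr {b b' : ℕ → Bool} {t : ℕ} (h : ∀ i < t, b i = b' i) :
    walk b t = walk b' t :=
  sum_congr rfl fun i hi => by rw [h i (mem_range.1 hi)]

theorem walk_not (b : ℕ → Bool) (t : ℕ) : walk (fun i => !b i) t = -walk b t := by
  simp only [walk, step_not, sum_neg_distrib]

theorem returnCount_congr {b b' : ℕ → Bool} {n : ℕ} (h : ∀ i < n, b i = b' i) :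
    returnCount n b = returnCount n b' := by
  unfold returnCount
  congr 1
  refine filter_congr fun t ht => ?_
  rw [walk_congr fun i hi => h i (hi.trans_le (mem_Icc.1 ht).2)]

theorem returnCount_not (n : ℕ) (b : ℕ → Bool) :
    returnCount n (fun i => !b i) = returnCount n b := by
  simp only [returnCount, walk_not, neg_eq_zero]

theorem returnCount_le (n : ℕ) (b : ℕ → Bool) : returnCount n b ≤ n :=
  (card_filter_le _ _).trans (by simp)

theorem returnCount_succ (n : ℕ) (b : ℕ → Bool) :
    returnCount (n + 1) b = returnCount n b + if walk b (n + 1) = 0 then 1 else 0 := by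
  rw [returnCount, ← insert_Icc_right_eq_Icc_add_one (by omega), filter_insert]
  split_ifs with h
  · rw [card_insert_of_notMem (by simp), returnCount]
  · rfl

theorem extendFalse_snoc_of_lt {n : ℕ} (v : Fin n → Bool) (b : Bool) {i : ℕ} (hi : i < n) :
    extendFalse (Fin.snoc v b : Fin (n + 1) → Bool) i = extendFalse v i := by
  simp [extendFalse, hi, Nat.lt_succ_of_lt hi, Fin.snoc]

theorem extendFalse_snoc_self {n : ℕ} (v : Fin n → Bool) (b : Bool) :
    extendFalse (Fin.snoc v b : Fin (n + 1) → Bool) n = b := by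
  simp [extendFalse, Fin.snoc]

theorem extendFalse_not_of_lt {n : ℕ} (v : Fin n → Bool) {i : ℕ} (hi : i < n) :
    extendFalse (fun k => !v k) i = !extendFalse v i := by
  simp [extendFalse, hi]

theorem returnCount_extendFalse_restrict (n : ℕ) (b : ℕ → Bool) :
    returnCount n (extendFalse fun i : Fin n => b i) = returnCount n b :=
  returnCount_congr fun i hi => by simp [extendFalse, hi]

theorem walk_extendFalse_snoc {n : ℕ} (v : Fin n → Bool) (b : Bool) {t : ℕ} (ht : t ≤ n) :
    walk (extendFalse (Fin.snoc v b : Fin (n + 1) → Bool)) t = walk (extendFalse v) t :=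
  walk_congr fun _ hi => extendFalse_snoc_of_lt v b (hi.trans_le ht)

theorem walk_extendFalse_snoc_succ {n : ℕ} (v : Fin n → Bool) (b : Bool) :
    walk (extendFalse (Fin.snoc v b : Fin (n + 1) → Bool)) (n + 1) =
      walk (extendFalse v) n + step b := by
  rw [walk_succ, walk_extendFalse_snoc v b le_rfl, extendFalse_snoc_self]

theorem returnCount_extendFalse_snoc {n : ℕ} (v : Fin n → Bool) (b : Bool) :
    returnCount (n + 1) (extendFalse (Fin.snoc v b : Fin (n + 1) → Bool)) =
      returnCount n (extendFalse v) + if walk (extendFalse v) n + step b = 0 then 1 else 0 := by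
  rw [returnCount_succ, walk_extendFalse_snoc_succ,
    returnCount_congr fun _ hi => extendFalse_snoc_of_lt v b hi]

theorem pathCount_zero (j : ℕ) (p : ℤ → Prop) :
    pathCount 0 j p = if j = 0 ∧ p 0 then 1 else 0 := by
  split_ifs with h <;> simp [pathCount, returnCount, walk, h, eq_comm]

theorem pathCount_eq_zero_of_lt {n j : ℕ} (h : n < j) (p : ℤ → Prop) : pathCount n j p = 0 := by
  simp only [pathCount, card_eq_zero, filter_eq_empty_iff]
  intro v _ hv
  have := returnCount_le n (extendFalse v)
  omega

theorem pathCount_congr {n j : ℕ} {p q : ℤ → Prop} (h : ∀ x : ℤ, |x| ≤ n → (p x ↔ q x)) :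
    pathCount n j p = pathCount n j q := by
  unfold pathCount
  congr 1
  exact filter_congr fun v _ => and_congr_right' (h _ (abs_walk_le _ _))

theorem pathCount_eq_zero_of_lt_abs {n j : ℕ} {p : ℤ → Prop} (h : ∀ x : ℤ, p x → n < |x|) :
    pathCount n j p = 0 := by
  rw [pathCount_congr (q := fun _ => False) fun x hx =>
    iff_false_intro fun hp => (h x hp).not_ge hx]
  simp [pathCount]

theorem pathCount_and_add_and_not (n j : ℕ) (p q : ℤ → Prop) :
    pathCount n j (fun x => p x ∧ q x) + pathCount n j (fun x => p x ∧ ¬q x) =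
      pathCount n j p := by
  have := card_filter_add_card_filter_not
    (s := {v : Fin n → Bool | returnCount n (extendFalse v) = j ∧ p (walk (extendFalse v) n)})
    (fun v => q (walk (extendFalse v) n))
  simp only [filter_filter, and_assoc] at this
  simpa only [pathCount] using this

theorem pathCount_neg (n j : ℕ) (p : ℤ → Prop) :
    pathCount n j (fun x => p (-x)) = pathCount n j p := by
  have hnot (v : Fin n → Bool) :
      returnCount n (extendFalse fun k => !v k) = returnCount n (extendFalse v) ∧
        walk (extendFalse fun k => !v k) n = -walk (extendFalse v) n := by
    have h : ∀ i < n, extendFalse (fun k => !v k) i = !extendFalse v i :=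
      fun i hi => extendFalse_not_of_lt v hi
    rw [returnCount_congr h, returnCount_not, walk_congr h, walk_not]
    exact ⟨rfl, rfl⟩
  apply card_nbij' (fun v k => !v k) (fun v k => !v k) <;>
    simp [Set.MapsTo, Set.LeftInvOn, Set.RightInvOn, hnot]

theorem pathCount_succ (n j : ℕ) (p : ℤ → Prop) :
    pathCount (n + 1) j p = ∑ b : Bool,
      #{v : Fin n → Bool | returnCount n (extendFalse v) +
        (if walk (extendFalse v) n + step b = 0 then 1 else 0) = j ∧
          p (walk (extendFalse v) n + step b)} := by
  simp only [pathCount, card_filter]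
  rw [← (Fin.snocEquiv fun _ => Bool).sum_comp, Fintype.sum_prod_type]
  simp only [Fin.snocEquiv, Equiv.coe_fn_mk, walk_extendFalse_snoc_succ,
    returnCount_extendFalse_snoc]

theorem pathCount_succ_of_ne_zero {n j : ℕ} {p : ℤ → Prop} (hp : ∀ x, p x → x ≠ 0) :
    pathCount (n + 1) j p =
      pathCount n j (fun x => p (x + 1)) + pathCount n j (fun x => p (x - 1)) := by
  rw [pathCount_succ, Fintype.sum_bool]
  congr 2 <;> ext v <;> simp only [mem_filter, mem_univ, true_and, step, if_true,
    Bool.false_eq_true, if_false, ← sub_eq_add_neg] <;>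
    exact and_congr_left fun h => by rw [if_neg (hp _ h), add_zero]

theorem pathCount_succ_zero_endpoint_zero (n : ℕ) : pathCount (n + 1) 0 (· = 0) = 0 := by
  rw [pathCount_succ, Fintype.sum_bool]
  simp

theorem pathCount_succ_succ_endpoint_zero (n j : ℕ) :
    pathCount (n + 1) (j + 1) (· = 0) = pathCount n j (· = -1) + pathCount n j (· = 1) := by
  rw [pathCount_succ, Fintype.sum_bool]
  congr 2 <;> ext v <;> simp only [mem_filter, mem_univ, true_and, step, if_true,
    Bool.false_eq_true, if_false]
  all_goals constructor <;> rintro ⟨h1, h2⟩ <;> split_ifs at * <;> omega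

theorem pathCount_succ_endpoint_eq {n j : ℕ} {x : ℤ} (hx : x ≠ 0) :
    pathCount (n + 1) j (· = x) = pathCount n j (· = x - 1) + pathCount n j (· = x + 1) := by
  rw [pathCount_succ_of_ne_zero fun y (hy : y = x) => hy ▸ hx]
  simp only [← eq_sub_iff_add_eq, sub_eq_iff_eq_add]

theorem pathCount_succ_ge {n j : ℕ} {c : ℤ} (hc : 0 < c) :
    pathCount (n + 1) j (c ≤ ·) = pathCount n j (c - 1 ≤ ·) + pathCount n j (c + 1 ≤ ·) := by
  rw [pathCount_succ_of_ne_zero fun y (hy : c ≤ y) => by omega]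
  simp only [← sub_le_iff_le_add, le_sub_iff_add_le]

theorem pathCount_ge_eq_add (n j : ℕ) (c : ℤ) :
    pathCount n j (c ≤ ·) = pathCount n j (· = c) + pathCount n j (c + 1 ≤ ·) := by
  rw [← pathCount_and_add_and_not n j (c ≤ ·) (· = c)]
  congr 2 <;> ext x <;> omega

theorem pathCount_succ_zero_ge_zero (n : ℕ) :
    pathCount (n + 1) 0 (0 ≤ ·) = pathCount (n + 1) 0 (1 ≤ ·) := by
  rw [pathCount_ge_eq_add, pathCount_succ_zero_endpoint_zero, zero_add, zero_add]

theorem pathCount_true_eq_add (n j : ℕ) :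
    pathCount n j (fun _ => True) = pathCount n j (0 ≤ ·) + pathCount n j (1 ≤ ·) := by
  rw [← pathCount_and_add_and_not n j _ (0 ≤ ·), ← pathCount_neg n j (1 ≤ ·)]
  congr 2 <;> ext x <;> simp only [true_and, not_le]; omega

theorem pathCount_add_endpoint_eq (m j : ℕ) (x : ℤ) :
    pathCount (m + j) j (· = x) = 2 ^ j * pathCount m 0 (· = |x| + j) := by
  induction hn : m + j generalizing m j x with
  | zero =>
    obtain ⟨rfl, rfl⟩ : m = 0 ∧ j = 0 := by omega
    simp [pathCount_zero, eq_comm]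
  | succ n ih =>
    by_cases hx : x = 0
    · subst hx
      cases j with
      | zero => simp [← hn]
      | succ j =>
        rw [pathCount_succ_succ_endpoint_zero, ih m j _ (by omega), ih m j _ (by omega)]
        simp only [abs_neg, abs_one, abs_zero]
        push_cast
        ring_nf
    · rw [pathCount_succ_endpoint_eq hx]
      cases m with
      | zero =>
        rw [pathCount_eq_zero_of_lt (by omega), pathCount_eq_zero_of_lt (by omega),
          pathCount_zero, if_neg fun h => by have := abs_pos.2 hx; omega, mul_zero, add_zero]
      | succ m =>
        rw [ih m j _ (by omega), ih m j _ (by omega),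
          pathCount_succ_endpoint_eq (by have := abs_pos.2 hx; omega), ← mul_add]
        rcases lt_or_gt_of_ne hx with hneg | hpos
        · rw [abs_of_neg hneg, abs_of_neg (show x - 1 < 0 by omega),
            abs_of_nonpos (show x + 1 ≤ 0 by omega), add_comm]
          ring_nf
        · rw [abs_of_pos hpos, abs_of_nonneg (show 0 ≤ x - 1 by omega),
            abs_of_pos (show 0 < x + 1 by omega)]
          ring_nf

theorem pathCount_add_endpoint_ge (m j c : ℕ) :
    pathCount (m + j) j ((c : ℤ) ≤ ·) = 2 ^ j * pathCount m 0 ((c : ℤ) + j ≤ ·) := by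
  -- downward induction on `c`, from heights above `m + j` where both sides vanish
  obtain ⟨k, hk⟩ : ∃ k, m + j < c + k := ⟨m + j + 1, by omega⟩
  induction k generalizing c with
  | zero =>
    rw [pathCount_eq_zero_of_lt_abs fun x (hx : (c : ℤ) ≤ x) => by
        rw [abs_of_nonneg (by omega)]; omega,
      pathCount_eq_zero_of_lt_abs fun x (hx : (c : ℤ) + j ≤ x) => by
        rw [abs_of_nonneg (by omega)]; omega, mul_zero]
  | succ k ih =>
    have hsucc := ih (c + 1) (by omega)
    push_cast at hsucc
    rw [pathCount_ge_eq_add, pathCount_ge_eq_add m 0, pathCount_add_endpoint_eq, Nat.abs_cast,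
      hsucc, mul_add, add_right_comm]

theorem pathCount_zero_ge_add_pathCount_zero_ge_succ (b r : ℕ) :
    pathCount (2 * b + r) 0 ((r : ℤ) ≤ ·) + pathCount (2 * b + r) 0 ((r : ℤ) + 1 ≤ ·) =
      (2 * b + r).choose (b + r) := by
  induction hm : 2 * b + r generalizing b r with
  | zero =>
    obtain ⟨rfl, rfl⟩ : b = 0 ∧ r = 0 := by omega
    simp [pathCount_zero]
  | succ m ih =>
    rcases r with _ | r
    · obtain ⟨b, rfl⟩ : ∃ b', b = b' + 1 := ⟨b - 1, by omega⟩
      obtain rfl : m = 2 * b + 1 := by omega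
      have h := ih b 1 rfl
      rw [Nat.cast_zero, zero_add, pathCount_succ_zero_ge_zero, pathCount_succ_ge one_pos, sub_self,
        pathCount_succ_zero_ge_zero, Nat.add_zero, Nat.choose_succ_succ',
        ← Nat.choose_symm_half, ← h]
      push_cast
      ring_nf
    · have htail : pathCount m 0 ((r : ℤ) + 2 ≤ ·) + pathCount m 0 ((r : ℤ) + 3 ≤ ·) =
          m.choose (b + r + 1) := by
        rcases b with _ | b
        · rw [pathCount_eq_zero_of_lt_abs, pathCount_eq_zero_of_lt_abs,
            Nat.choose_eq_zero_of_lt (by omega)]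
          all_goals intro x hx; rw [abs_of_nonneg (by omega)]; omega
        · have := ih b (r + 2) (by omega)
          push_cast at this
          ring_nf at this ⊢
          omega
      have h := ih b r (by omega)
      rw [show b + (r + 1) = b + r + 1 by ring, Nat.choose_succ_succ']
      push_cast
      rw [pathCount_succ_ge (by omega), pathCount_succ_ge (by omega)]
      ring_nf at h htail ⊢
      omega

theorem card_returnCount_eq (T r : ℕ) (hr : r ≤ T) :
    #{v : Fin (2 * T) → Bool | returnCount (2 * T) (extendFalse v) = r} =
      2 ^ r * (2 * T - r).choose T := by
  obtain ⟨b, rfl⟩ : ∃ b, T = b + r := ⟨T - r, by omega⟩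
  have hcount : #{v : Fin (2 * (b + r)) → Bool | returnCount (2 * (b + r)) (extendFalse v) = r} =
      pathCount (2 * (b + r)) r (fun _ => True) := by
    simp [pathCount]
  have h0 := pathCount_add_endpoint_ge (2 * b + r) r 0
  have h1 := pathCount_add_endpoint_ge (2 * b + r) r 1
  push_cast at h0 h1
  rw [zero_add] at h0
  rw [add_comm 1] at h1
  rw [hcount, show 2 * (b + r) = 2 * b + r + r by ring, pathCount_true_eq_add, h0, h1, ← mul_add,
    pathCount_zero_ge_add_pathCount_zero_ge_succ, Nat.add_sub_cancel]

end SimpleRandomWalk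

section FairCoins

open Finset

variable {Ω : Type*} [MeasurableSpace Ω] {P : Measure Ω}

theorem measure_eq_inv_two_of_toReal [IsProbabilityMeasure P] {f : Ω → Bool} (hf : Measurable f)
    (h : (P {ω | f ω = true}).toReal = 1 / 2) (b : Bool) : P {ω | f ω = b} = 2⁻¹ := by
  have htrue : P {ω | f ω = true} = 2⁻¹ := by
    rw [← ENNReal.ofReal_toReal (measure_ne_top P _), h, one_div,
      ENNReal.ofReal_inv_of_pos two_pos, ENNReal.ofReal_ofNat]
  cases b
  · rw [show {ω | f ω = false} = {ω | f ω = true}ᶜ by ext; simp,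
      measure_compl (show MeasurableSet {ω | f ω = true} from hf (measurableSet_singleton true))
        (measure_ne_top P _), measure_univ, htrue,
      ENNReal.one_sub_inv_two]
  · exact htrue

theorem measure_preimage_finset_eq {ξ : ℕ → Ω → Bool} (hξ : ∀ t, Measurable (ξ t))
    (hfair : ∀ t b, P {ω | ξ t ω = b} = 2⁻¹) (hind : iIndepFun ξ P) {n : ℕ}
    (s : Finset (Fin n → Bool)) :
    P ((fun ω (i : Fin n) => ξ i ω) ⁻¹' s) = #s * 2⁻¹ ^ n := by
  have hF : Measurable fun ω (i : Fin n) => ξ i ω := measurable_pi_lambda _ fun i => hξ i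
  have hcylinder (v : Fin n → Bool) : P ((fun ω (i : Fin n) => ξ i ω) ⁻¹' {v}) = 2⁻¹ ^ n := by
    have := (hind.precomp Fin.val_injective).measure_inter_preimage_eq_mul univ
      (sets := fun i => {v i}) fun _ _ => measurableSet_singleton _
    simp only [Set.preimage, Set.mem_singleton_iff, hfair, prod_const, card_univ,
      Fintype.card_fin] at this
    rw [← this]
    congr 1
    ext ω
    simp [funext_iff]
  rw [← sum_measure_preimage_singleton s fun v _ => hF (measurableSet_singleton v)]
  simp [hcylinder]

end FairCoins

/-- For the simple symmetric random walk on `ℤ` started at `0`, the probability of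
exactly `r` returns to the origin in the first `2T` steps (`0 ≤ r ≤ T`) equals
`2^{−(2T−r)}·C(2T−r, T)`. -/
theorem exact_returns_probability :
    ∀ T : ℕ, 1 ≤ T → ∀ r : ℕ, r ≤ T →
    ∀ (Ω : Type) (_ : MeasurableSpace Ω) (P : Measure Ω), IsProbabilityMeasure P →
    ∀ (ξ : ℕ → Ω → Bool),
    (∀ t, Measurable (ξ t)) →
    (∀ t, (P {ω | ξ t ω = true}).toReal = 1 / 2) →
    iIndepFun ξ P →
    (P {ω | ((Finset.Icc 1 (2 * T)).filter fun t =>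
          ∑ i ∈ Finset.range t, (if ξ i ω then (1 : ℤ) else -1) = 0).card = r}).toReal =
      (Nat.choose (2 * T - r) T : ℝ) / 2 ^ (2 * T - r) := by
  intro T _ r hr Ω _ P _ ξ hξ hhalf hind
  have hevent : {ω | SimpleRandomWalk.returnCount (2 * T) (fun i => ξ i ω) = r} =
      (fun ω (i : Fin (2 * T)) => ξ i ω) ⁻¹' ↑({v | SimpleRandomWalk.returnCount (2 * T)
        (SimpleRandomWalk.extendFalse v) = r} : Finset (Fin (2 * T) → Bool)) := by
    ext ω
    simp [SimpleRandomWalk.returnCount_extendFalse_restrict (2 * T) fun i => ξ i ω]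
  change (P {ω | SimpleRandomWalk.returnCount (2 * T) (fun i => ξ i ω) = r}).toReal = _
  rw [hevent, measure_preimage_finset_eq hξ
    (fun t => measure_eq_inv_two_of_toReal (hξ t) (hhalf t)) hind,
    SimpleRandomWalk.card_returnCount_eq T r hr]
  have hsplit : (2 : ℝ) ^ (2 * T) = 2 ^ (2 * T - r) * 2 ^ r := by
    rw [← pow_add, Nat.sub_add_cancel (by omega)]
  simp only [ENNReal.toReal_mul, ENNReal.toReal_natCast, ENNReal.toReal_pow, ENNReal.toReal_inv,
    ENNReal.toReal_ofNat, inv_pow, hsplit]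
  push_cast
  field_simp
end

section
/- For all integers T ≥ 1 and 1 ≤ r < T, one has (1 − r/(2T))^{2T−r} / (1 − r/T)^{T−r} ≤ exp(−r²/(4T)). -/
/-!
With `u = r/(2T)` write `2T − r = r + 2(T − r)` and `(1 − u)² / (1 − 2u) = 1 + u² / (1 − 2u)`.
Bounding `1 + x ≤ eˣ` in both factors, the exponents `−r u` and `(T − r) u² / (1 − 2u)` add up
exactly to `−r²/(4T)`.
-/

lemma sq_one_sub_div_one_sub_two_mul {u : ℝ} (hu : 2 * u ≠ 1) :
    (1 - u) ^ 2 / (1 - 2 * u) = 1 + u ^ 2 / (1 - 2 * u) := by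
  have : 1 - 2 * u ≠ 0 := sub_ne_zero.mpr (Ne.symm hu)
  rw [one_add_div this]
  ring

lemma one_sub_pow_add_two_mul_div_le_exp {u : ℝ} (hu : 2 * u < 1) (m n : ℕ) :
    (1 - u) ^ (m + 2 * n) / (1 - 2 * u) ^ n ≤
      Real.exp (-(m * u) + n * (u ^ 2 / (1 - 2 * u))) := by
  have hx : 0 ≤ 1 - u := by linarith
  calc (1 - u) ^ (m + 2 * n) / (1 - 2 * u) ^ n
      = (1 - u) ^ m * (1 + u ^ 2 / (1 - 2 * u)) ^ n := by
        rw [← sq_one_sub_div_one_sub_two_mul hu.ne, pow_add, pow_mul, div_pow, mul_div_assoc]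
    _ ≤ Real.exp (-u) ^ m * Real.exp (u ^ 2 / (1 - 2 * u)) ^ n := by
        gcongr
        · linarith [Real.add_one_le_exp (-u)]
        · linarith [Real.add_one_le_exp (u ^ 2 / (1 - 2 * u))]
    _ = Real.exp (-(m * u) + n * (u ^ 2 / (1 - 2 * u))) := by
        rw [← Real.exp_nat_mul, ← Real.exp_nat_mul, ← Real.exp_add, mul_neg]

theorem pow_ratio_le_exp_general (T r : ℕ) (hrT : r < T) :
    (1 - (r : ℝ) / (2 * T)) ^ (2 * T - r) / (1 - (r : ℝ) / T) ^ (T - r) ≤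
      Real.exp (-(r : ℝ) ^ 2 / (4 * T)) := by
  have hT : (0 : ℝ) < T := by exact_mod_cast (Nat.zero_le r).trans_lt hrT
  have hrT' : (r : ℝ) < T := by exact_mod_cast hrT
  have htwice : 2 * ((r : ℝ) / (2 * T)) = r / T := by field_simp
  have hu : 2 * ((r : ℝ) / (2 * T)) < 1 := by rwa [htwice, div_lt_one hT]
  have key := one_sub_pow_add_two_mul_div_le_exp hu r (T - r)
  rw [show r + 2 * (T - r) = 2 * T - r by omega, htwice] at key
  refine key.trans_eq (congrArg Real.exp ?_)
  have : (T : ℝ) - r ≠ 0 := by linarith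
  rw [Nat.cast_sub hrT.le]
  field_simp
  ring

/-- The elementary inequality `(1 − r/(2T))^{2T−r} / (1 − r/T)^{T−r} ≤ exp(−r²/(4T))`
for integers `1 ≤ r < T`. -/
theorem pow_ratio_le_exp (T r : ℕ) (hT : 1 ≤ T) (hr : 1 ≤ r) (hrT : r < T) :
    (1 - (r : ℝ) / (2 * T)) ^ (2 * T - r) / (1 - (r : ℝ) / T) ^ (T - r) ≤
      Real.exp (-(r : ℝ) ^ 2 / (4 * T)) :=
  pow_ratio_le_exp_general T r hrT
end

section
/- Let V be a finite set, let O : V → ℕ satisfy O_v ≥ 2 for all v ∈ V and ∑_{v∈V} O_v = U, let 0 < p ≤ 1 be real, and let n ≥ 1 be an integer with U·p ≤ n. Then ∑_{v∈V} p^{O_v}·(1 − 1/n)^{O_v}·(1 − p/n)^{U − O_v} ≤ (U·p²/2)·(1 − U·p/(2n)). -/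
open scoped BigOperators

/-!
Since every `O v ≥ 2`, each term is at most `p² (1 - p/n)^U` (replace `1 - 1/n` by the larger
`1 - p/n`), and there are at most `U / 2` terms. Finally `(1 - x)^U ≤ 1 - U x / 2` as long as
`U x ≤ 1`, applied with `x = p / n`.
-/

lemma one_sub_pow_le_one_sub_mul_div_two {x : ℝ} (hx : 0 ≤ x) {m : ℕ} (h : m * x ≤ 1) :
    (1 - x) ^ m ≤ 1 - m * x / 2 := by
  induction m with
  | zero => simp
  | succ k ih =>
    push_cast at h ⊢
    have hk : (k : ℝ) * x ≤ 1 := by nlinarith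
    calc (1 - x) ^ (k + 1) = (1 - x) ^ k * (1 - x) := pow_succ _ _
      _ ≤ (1 - k * x / 2) * (1 - x) := by gcongr <;> [nlinarith; exact ih hk]
      _ ≤ 1 - (k + 1) * x / 2 := by nlinarith

lemma pow_mul_pow_mul_pow_sub_le {p a b : ℝ} (hp0 : 0 ≤ p) (hp1 : p ≤ 1) (ha : 0 ≤ a)
    (hab : a ≤ b) {k U : ℕ} (hk : 2 ≤ k) (hkU : k ≤ U) :
    p ^ k * a ^ k * b ^ (U - k) ≤ p ^ 2 * b ^ U := by
  have hb : 0 ≤ b := ha.trans hab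
  calc p ^ k * a ^ k * b ^ (U - k) ≤ p ^ 2 * b ^ k * b ^ (U - k) := by
        have := pow_le_pow_of_le_one hp0 hp1 hk
        gcongr
    _ = p ^ 2 * b ^ U := by rw [mul_assoc, ← pow_add, Nat.add_sub_cancel' hkU]

lemma sum_pow_mul_pow_mul_pow_sub_le {ι : Type*} [Fintype ι] {O : ι → ℕ} {U : ℕ}
    (hO : ∀ i, 2 ≤ O i) (hU : ∑ i, O i = U) {p a b : ℝ} (hp0 : 0 ≤ p) (hp1 : p ≤ 1)
    (ha : 0 ≤ a) (hab : a ≤ b) :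
    ∑ i, p ^ O i * a ^ O i * b ^ (U - O i) ≤ U * p ^ 2 / 2 * b ^ U := by
  have hOU : ∀ i, O i ≤ U := fun i => hU ▸ Finset.single_le_sum (by simp) (Finset.mem_univ i)
  have hcard : 2 * (Fintype.card ι : ℝ) ≤ U := by
    have := Finset.card_nsmul_le_sum Finset.univ O 2 (fun i _ => hO i)
    rw [hU, smul_eq_mul, Finset.card_univ] at this
    exact_mod_cast (mul_comm 2 _).trans_le this
  have hb : 0 ≤ b := ha.trans hab
  calc ∑ i, p ^ O i * a ^ O i * b ^ (U - O i) ≤ ∑ _i : ι, p ^ 2 * b ^ U :=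
        Finset.sum_le_sum fun i _ => pow_mul_pow_mul_pow_sub_le hp0 hp1 ha hab (hO i) (hOU i)
    _ = Fintype.card ι * (p ^ 2 * b ^ U) := by simp
    _ ≤ U / 2 * (p ^ 2 * b ^ U) := by gcongr; linarith
    _ = U * p ^ 2 / 2 * b ^ U := by ring

theorem lazy_emptying_bound_general (V : Type) [Fintype V] (O : V → ℕ) (U n : ℕ) (p : ℝ)
    (hO : ∀ v, 2 ≤ O v) (hU : ∑ v, O v = U) (hp0 : 0 < p) (hp1 : p ≤ 1)
    (hUp : (U : ℝ) * p ≤ n) :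
    ∑ v, p ^ (O v) * (1 - 1 / (n : ℝ)) ^ (O v) * (1 - p / n) ^ (U - O v) ≤
      ((U : ℝ) * p ^ 2 / 2) * (1 - (U : ℝ) * p / (2 * n)) := by
  have hn_inv : 1 / (n : ℝ) ≤ 1 := by simpa using Nat.cast_inv_le_one n
  have hmono : 1 - 1 / (n : ℝ) ≤ 1 - p / n := by gcongr
  have hsmall : (U : ℝ) * (p / n) ≤ 1 := by
    rw [← mul_div_assoc]; exact div_le_one_of_le₀ hUp n.cast_nonneg
  have hpow : (1 - p / n) ^ U ≤ 1 - (U : ℝ) * p / (2 * n) := by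
    calc (1 - p / n) ^ U ≤ 1 - U * (p / n) / 2 :=
          one_sub_pow_le_one_sub_mul_div_two (by positivity) hsmall
      _ = 1 - U * p / (2 * n) := by ring
  calc _ ≤ (U : ℝ) * p ^ 2 / 2 * (1 - p / n) ^ U :=
        sum_pow_mul_pow_mul_pow_sub_le hO hU hp0.le hp1 (by linarith) hmono
    _ ≤ _ := by gcongr

/-- Finitary inequality bounding the expected number of occupied vertices becoming empty
in one step of the lazy dispersion process on `K_n` with loops:
`∑_{v∈V} p^{O_v}·(1 − 1/n)^{O_v}·(1 − p/n)^{U − O_v} ≤ (U·p²/2)·(1 − U·p/(2n))`. -/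
theorem lazy_emptying_bound (V : Type) [Fintype V] (O : V → ℕ) (U n : ℕ) (p : ℝ)
    (hO : ∀ v, 2 ≤ O v) (hU : ∑ v, O v = U) (hp0 : 0 < p) (hp1 : p ≤ 1)
    (hn : 1 ≤ n) (hUp : (U : ℝ) * p ≤ n) :
    ∑ v, p ^ (O v) * (1 - 1 / (n : ℝ)) ^ (O v) * (1 - p / n) ^ (U - O v) ≤
      ((U : ℝ) * p ^ 2 / 2) * (1 - (U : ℝ) * p / (2 * n)) :=
  lazy_emptying_bound_general V O U n p hO hU hp0 hp1 hUp
end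

section
/- For all real numbers δ and ε with 0 ≤ δ ≤ 1 and 0 ≤ ε ≤ δ/2, one has e^{(ε−δ)/2}·(1 + δ/2 + (ε/2)(1 − δ) + ε²/2) ≤ 1 + (δ/2)·(1 − 3δ/8). -/
/-!
Write `x = (δ - ε) / 2 ≥ 0`. From `1 + x ≤ e^x` we get `e^{-x} ≤ 1 / (1 + x)`, so it suffices to
prove the polynomial inequality `1 + δ/2 + (ε/2)(1 - δ) + ε²/2 ≤ (1 + (δ/2)(1 - 3δ/8))(1 + x)`.
The difference of the two sides is a cubic that is nonnegative on `0 ≤ ε ≤ δ/2 ≤ 1/2`,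
as witnessed by products of the constraints `δ ≥ 0`, `1 - δ ≥ 0`, `ε ≥ 0`, `δ/2 - ε ≥ 0`.
-/

open Real

theorem exp_neg_mul_le_of_le_mul_one_add {x p q : ℝ} (hx : -1 < x) (hp : 0 ≤ p)
    (h : p ≤ q * (1 + x)) : exp (-x) * p ≤ q := by
  have hq : 0 ≤ q := nonneg_of_mul_nonneg_left (hp.trans h) (by linarith)
  have hdecay : (1 + x) * exp (-x) ≤ 1 := by
    calc (1 + x) * exp (-x) ≤ exp x * exp (-x) := by
          gcongr; linarith [add_one_le_exp x]
      _ = 1 := by rw [← exp_add, add_neg_cancel, exp_zero]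
  calc exp (-x) * p ≤ exp (-x) * (q * (1 + x)) := by gcongr
    _ = q * ((1 + x) * exp (-x)) := by ring
    _ ≤ q := mul_le_of_le_one_right hq hdecay

theorem poly_le_mul_one_add_half_sub {δ ε : ℝ} (hδ0 : 0 ≤ δ) (hδ1 : δ ≤ 1) (hε0 : 0 ≤ ε)
    (hε : ε ≤ δ / 2) :
    1 + δ / 2 + (ε / 2) * (1 - δ) + ε ^ 2 / 2 ≤
      (1 + (δ / 2) * (1 - 3 * δ / 8)) * (1 + (δ - ε) / 2) := by
  nlinarith [mul_nonneg (mul_nonneg hδ0 hδ0) (sub_nonneg.2 hδ1),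
    mul_nonneg hε0 (sub_nonneg.2 hε), mul_nonneg hε0 hδ0]

/-- The core estimate for dispersion on the complete graph with more than `(1+δ)n/2`
particles: for `0 ≤ δ ≤ 1` and `0 ≤ ε ≤ δ/2`,
`e^{(ε−δ)/2}·(1 + δ/2 + (ε/2)(1 − δ) + ε²/2) ≤ 1 + (δ/2)·(1 − 3δ/8)`. -/
theorem exp_mul_poly_le (δ ε : ℝ) (hδ0 : 0 ≤ δ) (hδ1 : δ ≤ 1) (hε0 : 0 ≤ ε)
    (hε : ε ≤ δ / 2) :
    Real.exp ((ε - δ) / 2) * (1 + δ / 2 + (ε / 2) * (1 - δ) + ε ^ 2 / 2) ≤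
      1 + (δ / 2) * (1 - 3 * δ / 8) := by
  rw [show (ε - δ) / 2 = -((δ - ε) / 2) by ring]
  exact exp_neg_mul_le_of_le_mul_one_add (by linarith) (by nlinarith)
    (poly_le_mul_one_add_half_sub hδ0 hδ1 hε0 hε)
end
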